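/- arXiv:math/9808002 — 5 statements merged into one kernel-verified Lean document; each statement's English description precedes it below -/
import Mathlib

section
/- Let $n \geq 1$, let $A = (a_{ij})$ be an $n \times n$ matrix over a commutative ring, let $x, y$ be vectors of length $n$, and let $z$ be a scalar. Then $z^{n-1} \det \begin{pmatrix} A & x \\ y^T & z \end{pmatrix} = \det\big( (z a_{ij} - x_i y_j)_{1 \le i,j \le n} \big)$. -/
/-!
Right multiplication by `[z • 1, 0; -yᵀ, 1]` turns `[A, x; yᵀ, z]` into the block-triangular matrix
`[z • A - x yᵀ, x; 0, z]`, so `z ^ n * det [A, x; yᵀ, z] = z * det (z • A - x yᵀ)`. One factor `z`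
cancels for the generic scalar `X` in `R[X]`, which is a non-zero-divisor, and evaluating at `z`
gives the identity over any commutative ring.
-/

open Matrix Polynomial

namespace Matrix

variable {m ι R : Type*} [CommRing R]

def bordered (A : Matrix m m R) (x y : m → R) (z : R) : Matrix (m ⊕ ι) (m ⊕ ι) R :=
  fromBlocks A (replicateCol ι x) (replicateRow ι y) (of fun _ _ => z)

lemma map_bordered {S : Type*} [CommRing S] (f : R →+* S) (A : Matrix m m R) (x y : m → R)
    (z : R) :
    (bordered (ι := ι) A x y z).map f = bordered (A.map f) (f ∘ x) (f ∘ y) (f z) := by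
  ext (i | i) (j | j) <;> simp [bordered]

variable [Fintype m] [DecidableEq m] [Fintype ι] [DecidableEq ι] [Unique ι]

lemma bordered_mul_fromBlocks (A : Matrix m m R) (x y : m → R) (z : R) :
    bordered A x y z * fromBlocks (z • 1) 0 (-replicateRow ι y) 1 =
      fromBlocks (of fun i j => z * A i j - x i * y j) (replicateCol ι x) 0 (of fun _ _ => z) := by
  rw [bordered, fromBlocks_multiply]
  congr 1 <;> ext <;> simp [Matrix.mul_apply, sub_eq_add_neg]

lemma pow_card_mul_det_bordered (A : Matrix m m R) (x y : m → R) (z : R) :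
    z ^ Fintype.card m * (bordered (ι := ι) A x y z).det =
      z * (of fun i j => z * A i j - x i * y j).det := by
  have h := congrArg det (bordered_mul_fromBlocks (ι := ι) A x y z)
  rw [det_mul, det_fromBlocks_zero₁₂, det_fromBlocks_zero₂₁] at h
  simpa [det_smul, mul_comm] using h

lemma pow_card_pred_mul_det_bordered [Nonempty m] (A : Matrix m m R) (x y : m → R) (z : R) :
    z ^ (Fintype.card m - 1) * (bordered (ι := ι) A x y z).det =
      (of fun i j => z * A i j - x i * y j).det := by
  have generic : (X : R[X]) ^ (Fintype.card m - 1) *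
        (bordered (ι := ι) (A.map C) (C ∘ x) (C ∘ y) X).det =
      (of fun i j => X * A.map C i j - (C ∘ x) i * (C ∘ y) j).det := by
    refine isRegular_X.left ?_
    simp only [← mul_assoc, ← pow_succ', Nat.sub_add_cancel Fintype.card_pos]
    exact pow_card_mul_det_bordered _ _ _ _
  have eval_rhs : (evalRingHom z).mapMatrix
      (of fun i j => X * A.map C i j - (C ∘ x) i * (C ∘ y) j) =
        of fun i j => z * A i j - x i * y j := by
    ext; simp [mul_comm z]
  have h := congrArg (evalRingHom z) generic
  rw [map_mul, map_pow, RingHom.map_det, RingHom.map_det, eval_rhs,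
    RingHom.mapMatrix_apply, map_bordered] at h
  simpa [Function.comp_def] using h

end Matrix

/-- Lemma 5 of the paper: for an `n × n` matrix `A`, column vector `x`, row vector `y`
and scalar `z` over a commutative ring,
`z^(n-1) * det [A x; yᵀ z] = det (z•A - x⬝y)` entrywise `z * A i j - x i * y j`. -/
theorem stmt_0 {R : Type*} [CommRing R] (n : ℕ) (hn : 1 ≤ n)
    (A : Matrix (Fin n) (Fin n) R) (x y : Fin n → R) (z : R) :
    z ^ (n - 1) *
      (Matrix.fromBlocks A (Matrix.replicateCol (Fin 1) x) (Matrix.replicateRow (Fin 1) y)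
        (Matrix.of fun _ _ => z)).det
      = (Matrix.of fun i j : Fin n => z * A i j - x i * y j).det := by
  have : Nonempty (Fin n) := ⟨⟨0, hn⟩⟩
  have h := pow_card_pred_mul_det_bordered (ι := Fin 1) A x y z
  rwa [Fintype.card_fin] at h
end

section
/- In the polynomial ring $\mathbb{Z}[\alpha_{-1}, \alpha_0, \alpha_1, f_{-1}, f_0, f_1]$, define $A_{12} = 1$, $A_{13} = f_0$, $A_{14} = f_0 f_1 - \alpha_1$, $A_{23} = f_{-1} f_0 + \alpha_{-1}$, $A_{24} = f_{-1} f_0 f_1 + \alpha_{-1} f_1 - \alpha_1 f_{-1}$, and $A_{34} = f_{-1} f_0^2 f_1 + \alpha_{-1} f_0 f_1 - \alpha_1 f_{-1} f_0 + \alpha_0(\alpha_{-1} + \alpha_0 + \alpha_1)$. Then the Plücker relation $A_{12} A_{34} - A_{13} A_{24} + A_{14} A_{23} = \alpha_0(\alpha_{-1}+\alpha_0+\alpha_1) + \alpha_{-1}\alpha_1$ fails to vanish in general; however, the normalized quantities $a_{ij} = A_{ij}/N_{ij}$ with $N_{12}=1$, $N_{13}=\alpha_0$, $N_{14}=(\alpha_0+\alpha_1)\alpha_1$,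 $N_{23}=(\alpha_{-1}+\alpha_0)\alpha_{-1}$, $N_{24}=(\alpha_{-1}+\alpha_0+\alpha_1)\alpha_{-1}\alpha_1$, $N_{34}=(\alpha_{-1}+\alpha_0+\alpha_1)(\alpha_0+\alpha_1)(\alpha_{-1}+\alpha_0)\alpha_0$ satisfy $a_{12} a_{34} - a_{13} a_{24} + a_{14} a_{23} = 0$ in the fraction field $\mathbb{Q}(\alpha_{-1},\alpha_0,\alpha_1,f_{-1},f_0,f_1)$. -/
open MvPolynomial

/-- The variables `α₋₁, α₀, α₁, f₋₁, f₀, f₁` as polynomials in `ℤ[X₀,…,X₅]`. -/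
noncomputable abbrev pA1 : MvPolynomial (Fin 6) ℤ := X 0  -- α₋₁
noncomputable abbrev pA2 : MvPolynomial (Fin 6) ℤ := X 1  -- α₀
noncomputable abbrev pA3 : MvPolynomial (Fin 6) ℤ := X 2  -- α₁
noncomputable abbrev pF1 : MvPolynomial (Fin 6) ℤ := X 3  -- f₋₁
noncomputable abbrev pF2 : MvPolynomial (Fin 6) ℤ := X 4  -- f₀
noncomputable abbrev pF3 : MvPolynomial (Fin 6) ℤ := X 5  -- f₁

noncomputable abbrev pA12 : MvPolynomial (Fin 6) ℤ := 1
noncomputable abbrev pA13 : MvPolynomial (Fin 6) ℤ := pF2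
noncomputable abbrev pA14 : MvPolynomial (Fin 6) ℤ := pF2 * pF3 - pA3
noncomputable abbrev pA23 : MvPolynomial (Fin 6) ℤ := pF1 * pF2 + pA1
noncomputable abbrev pA24 : MvPolynomial (Fin 6) ℤ := pF1 * pF2 * pF3 + pA1 * pF3 - pA3 * pF1
noncomputable abbrev pA34 : MvPolynomial (Fin 6) ℤ :=
  pF1 * pF2 ^ 2 * pF3 + pA1 * pF2 * pF3 - pA3 * pF1 * pF2 + pA2 * (pA1 + pA2 + pA3)

noncomputable abbrev pN12 : MvPolynomial (Fin 6) ℤ := 1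
noncomputable abbrev pN13 : MvPolynomial (Fin 6) ℤ := pA2
noncomputable abbrev pN14 : MvPolynomial (Fin 6) ℤ := (pA2 + pA3) * pA3
noncomputable abbrev pN23 : MvPolynomial (Fin 6) ℤ := (pA1 + pA2) * pA1
noncomputable abbrev pN24 : MvPolynomial (Fin 6) ℤ := (pA1 + pA2 + pA3) * pA1 * pA3
noncomputable abbrev pN34 : MvPolynomial (Fin 6) ℤ :=
  (pA1 + pA2 + pA3) * (pA2 + pA3) * (pA1 + pA2) * pA2

/-- The field `ℚ(α₋₁,α₀,α₁,f₋₁,f₀,f₁)`. -/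
noncomputable abbrev K6 : Type := FractionRing (MvPolynomial (Fin 6) ℚ)

noncomputable abbrev kv (i : Fin 6) : K6 := algebraMap (MvPolynomial (Fin 6) ℚ) K6 (X i)

set_option maxHeartbeats 4000000 in
/-- The unnormalized Plücker combination `A₁₂A₃₄ - A₁₃A₂₄ + A₁₄A₂₃` of the numerators of
the normalized τ-functions of Example 1 fails to vanish in `ℤ[α;f]`; but after clearing
denominators, and in the fraction field `ℚ(α₋₁,α₀,α₁,f₋₁,f₀,f₁)`, the normalized quantities
`aᵢⱼ = Aᵢⱼ/Nᵢⱼ` satisfy the Plücker relation `a₁₂a₃₄ - a₁₃a₂₄ + a₁₄a₂₃ = 0` (eq. (1)). -/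
theorem stmt_3 :
    (pA12 * pA34 - pA13 * pA24 + pA14 * pA23 ≠ 0) ∧
    (pN13 * pN24 * (pA12 * pA34) * (pN14 * pN23)
      - pN12 * pN34 * (pA13 * pA24) * (pN14 * pN23)
      + pN12 * pN34 * (pN13 * pN24) * (pA14 * pA23) = 0) ∧
    ((1 : K6) / 1 *
        ((kv 3 * kv 4 ^ 2 * kv 5 + kv 0 * kv 4 * kv 5 - kv 2 * kv 3 * kv 4
            + kv 1 * (kv 0 + kv 1 + kv 2)) /
          ((kv 0 + kv 1 + kv 2) * (kv 1 + kv 2) * (kv 0 + kv 1) * kv 1))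
      - kv 4 / kv 1 *
        ((kv 3 * kv 4 * kv 5 + kv 0 * kv 5 - kv 2 * kv 3) /
          ((kv 0 + kv 1 + kv 2) * kv 0 * kv 2))
      + (kv 4 * kv 5 - kv 2) / ((kv 1 + kv 2) * kv 2) *
        ((kv 3 * kv 4 + kv 0) / ((kv 0 + kv 1) * kv 0)) = 0) := by
  refine ⟨?_, by ring, ?_⟩
  · intro h
    have h2 := congrArg (MvPolynomial.eval (fun _ => (1 : ℤ))) h
    simp [pA12, pA13, pA14, pA23, pA24, pA34, pA1, pA2, pA3, pF1, pF2, pF3] at h2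
  · have hX : ∀ p : MvPolynomial (Fin 6) ℚ, p ≠ 0 →
        algebraMap (MvPolynomial (Fin 6) ℚ) K6 p ≠ 0 := by
      intro p hp
      exact fun h => hp ((map_eq_zero_iff _ (IsFractionRing.injective _ _)).mp h)
    have h0 : kv 0 ≠ 0 := hX _ (MvPolynomial.X_ne_zero 0)
    have h1 : kv 1 ≠ 0 := hX _ (MvPolynomial.X_ne_zero 1)
    have h2 : kv 2 ≠ 0 := hX _ (MvPolynomial.X_ne_zero 2)
    have h01 : kv 0 + kv 1 ≠ 0 := by
      rw [show kv 0 + kv 1 = algebraMap (MvPolynomial (Fin 6) ℚ) K6 (X 0 + X 1) by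
        simp [kv]]
      refine hX _ ?_
      intro h
      have := congrArg (MvPolynomial.eval (fun _ => (1 : ℚ))) h
      norm_num at this
    have h12 : kv 1 + kv 2 ≠ 0 := by
      rw [show kv 1 + kv 2 = algebraMap (MvPolynomial (Fin 6) ℚ) K6 (X 1 + X 2) by
        simp [kv]]
      refine hX _ ?_
      intro h
      have := congrArg (MvPolynomial.eval (fun _ => (1 : ℚ))) h
      norm_num at this
    have h012 : kv 0 + kv 1 + kv 2 ≠ 0 := by
      rw [show kv 0 + kv 1 + kv 2 = algebraMap (MvPolynomial (Fin 6) ℚ) K6 (X 0 + X 1 + X 2) by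
        simp [kv]]
      refine hX _ ?_
      intro h
      have := congrArg (MvPolynomial.eval (fun _ => (1 : ℚ))) h
      norm_num at this
    have hb : (1 : K6) * ((kv 0 + kv 1 + kv 2) * (kv 1 + kv 2) * (kv 0 + kv 1) * kv 1) ≠ 0 :=
      mul_ne_zero one_ne_zero
        (mul_ne_zero (mul_ne_zero (mul_ne_zero h012 h12) h01) h1)
    have hd : kv 1 * ((kv 0 + kv 1 + kv 2) * kv 0 * kv 2) ≠ 0 :=
      mul_ne_zero h1 (mul_ne_zero (mul_ne_zero h012 h0) h2)
    have hf : (kv 1 + kv 2) * kv 2 * ((kv 0 + kv 1) * kv 0) ≠ 0 :=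
      mul_ne_zero (mul_ne_zero h12 h2) (mul_ne_zero h01 h0)
    simp only [div_mul_div_comm]
    rw [div_sub_div _ _ hb hd, div_add_div _ _ (mul_ne_zero hb hd) hf, div_eq_zero_iff]
    left
    simp only [kv]
    simp only [← map_one (algebraMap (MvPolynomial (Fin 6) ℚ) K6), ← map_add, ← map_mul,
      ← map_sub, ← map_pow]
    refine (map_eq_zero_iff _ (IsFractionRing.injective _ _)).mpr ?_
    ring
end

section
/- With notation as above, one has the second hook recursion: $X_{p,q+1} = f_{-(q+1)} \cdot s_{-(q+1)}(X_{p,q})$, where $s_{-(q+1)}$ acts by $\alpha_{-(q+1)} \mapsto -\alpha_{-(q+1)}$, $\alpha_{-(q+1)\pm1} \mapsto \alpha_{-(q+1)\pm1} + \alpha_{-(q+1)}$, $f_{-(q+1)\pm1} \mapsto f_{-(q+1)\pm1} \pm \alpha_{-(q+1)}/f_{-(q+1)}$, fixing all other generators. -/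
/-!
`X_{p,q+1}` is the continuant of a tridiagonal matrix whose first pivot is `f_{-(q+1)}`.
Eliminating that pivot multiplies the determinant by `f_{-(q+1)}` and, since
`β_{-q} = -α_{-(q+1)}`, replaces the next diagonal entry `f_{-q}` by
`f_{-q} + α_{-(q+1)} / f_{-(q+1)}`. The remaining subdiagonal entries `β_j` (`j > -q`) of
`X_{p,q+1}` are those of `X_{p,q}` once `α_{-q}` is replaced by `α_{-q} + α_{-(q+1)}`, and
`X_{p,q}` does not involve the other generators moved by `s_{-(q+1)}`.
-/

/-- The subdiagonal entries of `X_{p,q}`: `βⱼ = αⱼ + ⋯ + α_{p-1} = vⱼ - v_p` for `j > 0`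
and `βⱼ = -(α_{-q} + ⋯ + α_{j-1}) = vⱼ - v_{-q+1}` for `j ≤ 0`. -/
noncomputable def betaF {K : Type*} [Field K] (p q : ℕ) (α : ℤ → K) (j : ℤ) : K :=
  if 0 < j then ∑ i ∈ Finset.Icc j ((p : ℤ) - 1), α i
  else -∑ i ∈ Finset.Icc (-(q : ℤ)) (j - 1), α i

/-- `X_{p,q}`: the determinant of the `(p+q) × (p+q)` tridiagonal matrix with diagonal
`f_{-q},…,f_{p-1}`, superdiagonal `1`'s and subdiagonal `β_{-q+1},…,β_{p-1}`. -/
noncomputable def Xdet {K : Type*} [Field K] (p q : ℕ) (α f : ℤ → K) : K :=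
  (Matrix.of fun r c : Fin (p + q) =>
    if (r : ℕ) = c then f ((r : ℤ) - q)
    else if (c : ℕ) = (r : ℕ) + 1 then 1
    else if (r : ℕ) = (c : ℕ) + 1 then betaF p q α ((r : ℤ) - q)
    else 0).det

def continuant {R : Type*} [CommRing R] (d b : ℕ → R) : ℕ → R
  | 0 => 1
  | 1 => d 0
  | n + 2 => d (n + 1) * continuant d b (n + 1) - b (n + 1) * continuant d b n

theorem continuant_succ_eq_mul {R : Type*} [CommRing R] {d b d' b' : ℕ → R} {F : R}
    (hd0 : d 0 = F) (hpivot : d 1 * F - b 1 = F * d' 0)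
    (hd : ∀ i, 1 ≤ i → d (i + 1) = d' i) (hb : ∀ i, 1 ≤ i → b (i + 1) = b' i) :
    ∀ n, continuant d b (n + 1) = F * continuant d' b' n := by
  intro n
  induction n using Nat.twoStepInduction with
  | zero => simp [continuant, hd0]
  | one => simp [continuant, hd0, ← hpivot]
  | more n ih₁ ih₂ =>
    rw [continuant, ih₂, ih₁, hd (n + 1) (by omega), hb (n + 1) (by omega), continuant]
    ring

namespace Matrix

variable {R : Type*} [CommRing R]

theorem det_succ_eq_mul_of_col_last {n : ℕ} (A : Matrix (Fin (n + 1)) (Fin (n + 1)) R)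
    (h : ∀ i : Fin n, A i.castSucc (Fin.last n) = 0) :
    A.det = A (Fin.last n) (Fin.last n) * (A.submatrix Fin.castSucc Fin.castSucc).det := by
  rw [det_succ_column A (Fin.last n), Fin.sum_univ_castSucc]
  simp [h, Fin.succAbove_last]

-- `b r` sits in row `r`, so `b 0` is unused.
def tridiag (d b : ℕ → R) (n : ℕ) : Matrix (Fin n) (Fin n) R :=
  of fun r c => if (r : ℕ) = c then d r
    else if (c : ℕ) = r + 1 then 1
    else if (r : ℕ) = c + 1 then b r else 0

theorem tridiag_submatrix_castSucc (d b : ℕ → R) (n : ℕ) :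
    (tridiag d b (n + 1)).submatrix Fin.castSucc Fin.castSucc = tridiag d b n := by
  ext r c
  simp [tridiag]

theorem det_tridiag_succ_succ (d b : ℕ → R) (n : ℕ) :
    (tridiag d b (n + 2)).det =
      d (n + 1) * (tridiag d b (n + 1)).det - b (n + 1) * (tridiag d b n).det := by
  set T := tridiag d b (n + 2)
  have hsub : (Fin.last n).castSucc.succAbove (Fin.last n) = Fin.last (n + 1) := by
    ext; simp [Fin.succAbove]
  have hsub' (j : Fin n) : (Fin.last n).castSucc.succAbove j.castSucc = j.castSucc.castSucc := by
    ext; simp [Fin.succAbove, Fin.lt_def, j.isLt]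
  -- after deleting the last row and the column of `b (n + 1)`, the last column is `(0, …, 0, 1)`
  have hminor : (T.submatrix Fin.castSucc (Fin.last n).castSucc.succAbove).det =
      (tridiag d b n).det := by
    rw [det_succ_eq_mul_of_col_last]
    · have hcorner : T (Fin.last n).castSucc (Fin.last (n + 1)) = 1 := by simp [T, tridiag]
      have hrest : (T.submatrix Fin.castSucc (Fin.last n).castSucc.succAbove).submatrix
          Fin.castSucc Fin.castSucc = tridiag d b n := by
        ext i j
        simp [T, tridiag, hsub']
      simp only [submatrix_apply, hsub, hcorner, hrest, one_mul]
    · intro i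
      simp [T, tridiag, hsub]
      split_ifs <;> first | rfl | omega
  have hrow (j : Fin n) : T (Fin.last (n + 1)) j.castSucc.castSucc = 0 := by
    simp [T, tridiag]
    split_ifs <;> first | rfl | omega
  have hb : T (Fin.last (n + 1)) (Fin.last n).castSucc = b (n + 1) := by simp [T, tridiag]; omega
  have hd : T (Fin.last (n + 1)) (Fin.last (n + 1)) = d (n + 1) := by simp [T, tridiag]
  rw [det_succ_row _ (Fin.last (n + 1)), Fin.sum_univ_castSucc, Fin.sum_univ_castSucc,
    Finset.sum_eq_zero (fun j _ => by rw [hrow, mul_zero, zero_mul]), Fin.succAbove_last, hminor,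
    tridiag_submatrix_castSucc, hb, hd]
  simp
  ring

theorem det_tridiag (d b : ℕ → R) (n : ℕ) : (tridiag d b n).det = continuant d b n := by
  induction n using Nat.twoStepInduction with
  | zero => simp [continuant]
  | one => simp [continuant, tridiag]
  | more n ih₁ ih₂ => rw [det_tridiag_succ_succ, ih₁, ih₂, continuant]

end Matrix

section HookRecursion

variable {K : Type*} [Field K]

theorem Xdet_eq_continuant (p q : ℕ) (α f : ℤ → K) :
    Xdet p q α f = continuant (fun i => f (i - q)) (fun i => betaF p q α (i - q)) (p + q) := by
  rw [← Matrix.det_tridiag]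
  rfl

/-- The simple reflection `s_c` acting on the generators `α` and `f`. -/
def reflectAlpha (c : ℤ) (α : ℤ → K) (j : ℤ) : K :=
  if j = c then -α c else if j = c - 1 ∨ j = c + 1 then α j + α c else α j

def reflectF (c : ℤ) (α f : ℤ → K) (j : ℤ) : K :=
  if j = c + 1 then f (c + 1) + α c / f c else if j = c - 1 then f (c - 1) - α c / f c else f j

theorem reflectAlpha_of_lt {c j : ℤ} (α : ℤ → K) (h : c + 1 < j) :
    reflectAlpha c α j = α j := by
  rw [reflectAlpha, if_neg (by omega), if_neg (by omega)]

theorem reflectF_of_lt {c j : ℤ} (α f : ℤ → K) (h : c + 1 < j) :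
    reflectF c α f j = f j := by
  rw [reflectF, if_neg (by omega), if_neg (by omega)]

theorem betaF_succ_right_neg (p q : ℕ) (α : ℤ → K) :
    betaF p (q + 1) α (-q) = -α (-(q + 1)) := by
  rw [betaF, if_neg (by omega)]
  push_cast
  rw [show -(q : ℤ) - 1 = -(q + 1) by ring, Finset.Icc_self, Finset.sum_singleton]

theorem betaF_succ_right (p q : ℕ) (α : ℤ → K) {j : ℤ} (hj : -(q : ℤ) < j) :
    betaF p (q + 1) α j = betaF p q (reflectAlpha (-(q + 1)) α) j := by
  unfold betaF
  split_ifs with hpos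
  · exact Finset.sum_congr rfl fun i hi =>
      (reflectAlpha_of_lt α (by linarith [(Finset.mem_Icc.mp hi).1])).symm
  · have hq : -(q : ℤ) ≤ j - 1 := by omega
    rw [neg_inj, Nat.cast_succ, ← Finset.add_sum_Ioc_eq_sum_Icc (by omega),
      ← Finset.add_sum_Ioc_eq_sum_Icc hq, ← Finset.Icc_add_one_left_eq_Ioc,
      show -((q : ℤ) + 1) + 1 = -q by ring, ← Finset.add_sum_Ioc_eq_sum_Icc hq,
      Finset.sum_congr rfl fun i hi =>
        reflectAlpha_of_lt α (by linarith [(Finset.mem_Ioc.mp hi).1])]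
    rw [reflectAlpha, if_neg (by omega), if_pos (by right; ring)]
    ring

end HookRecursion

theorem stmt_10_general {K : Type*} [Field K] (p q : ℕ)
    (α f : ℤ → K) (hf : f (-((q : ℤ) + 1)) ≠ 0) :
    Xdet p (q + 1) α f =
      f (-((q : ℤ) + 1)) * Xdet p q
        (fun j => if j = -((q : ℤ) + 1) then -α (-((q : ℤ) + 1))
          else if j = -((q : ℤ) + 1) - 1 ∨ j = -((q : ℤ) + 1) + 1 then
            α j + α (-((q : ℤ) + 1))
          else α j)
        (fun j => if j = -((q : ℤ) + 1) + 1 then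
            f (-((q : ℤ) + 1) + 1) + α (-((q : ℤ) + 1)) / f (-((q : ℤ) + 1))
          else if j = -((q : ℤ) + 1) - 1 then
            f (-((q : ℤ) + 1) - 1) - α (-((q : ℤ) + 1)) / f (-((q : ℤ) + 1))
          else f j) := by
  change _ = _ * Xdet p q (reflectAlpha _ α) (reflectF _ α f)
  rw [Xdet_eq_continuant, Xdet_eq_continuant]
  refine continuant_succ_eq_mul ?_ ?_ ?_ ?_ (p + q)
  · simp
  · have hc : -((q : ℤ) + 1) + 1 = -q := by ring
    simp only [Nat.cast_zero, zero_sub, Nat.cast_succ, show (0 + 1 : ℤ) - (q + 1) = -q by ring]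
    rw [betaF_succ_right_neg, reflectF, if_pos hc.symm, hc, mul_add, mul_div_cancel₀ _ hf]
    ring
  · intro i hi
    rw [reflectF_of_lt _ _ (by omega)]
    congr 1; push_cast; ring
  · intro i hi
    rw [← betaF_succ_right _ _ _ (by omega)]
    congr 1; push_cast; ring

/-- Second hook recursion of Lemma 4: `X_{p,q+1} = f_{-(q+1)} · s_{-(q+1)}(X_{p,q})`, where
`s_{-(q+1)}` acts by `α_{-(q+1)} ↦ -α_{-(q+1)}`, `α_{-(q+1)±1} ↦ α_{-(q+1)±1} + α_{-(q+1)}`,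
`f_{-(q+1)±1} ↦ f_{-(q+1)±1} ± α_{-(q+1)}/f_{-(q+1)}`, fixing all other generators. -/
theorem stmt_10 {K : Type*} [Field K] (p q : ℕ) (hp : 1 ≤ p)
    (α f : ℤ → K) (hf : f (-((q : ℤ) + 1)) ≠ 0) :
    Xdet p (q + 1) α f =
      f (-((q : ℤ) + 1)) * Xdet p q
        (fun j => if j = -((q : ℤ) + 1) then -α (-((q : ℤ) + 1))
          else if j = -((q : ℤ) + 1) - 1 ∨ j = -((q : ℤ) + 1) + 1 then
            α j + α (-((q : ℤ) + 1))
          else α j)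
        (fun j => if j = -((q : ℤ) + 1) + 1 then
            f (-((q : ℤ) + 1) + 1) + α (-((q : ℤ) + 1)) / f (-((q : ℤ) + 1))
          else if j = -((q : ℤ) + 1) - 1 then
            f (-((q : ℤ) + 1) - 1) - α (-((q : ℤ) + 1)) / f (-((q : ℤ) + 1))
          else f j) :=
  stmt_10_general p q α f hf
end

section
/- Consider the automorphisms $s_i$ ($i \in \mathbb{Z}$) of the field $K = \mathbb{C}(\alpha_i, f_i, \tau_i : i \in \mathbb{Z})$ defined by $s_i(\alpha_i) = -\alpha_i$, $s_i(\alpha_{i\pm1}) = \alpha_{i\pm1}+\alpha_i$, $s_i(\alpha_j) = \alpha_j$ otherwise; $s_i(f_i) = f_i$, $s_i(f_{i\pm1}) = f_{i\pm1} \pm \alpha_i/f_i$, $s_i(f_j) = f_j$ otherwise; $s_i(\tau_i) = f_i \tau_{i-1}\tau_{i+1}/\tau_i$, $s_i(\tau_j) = \tau_j$ otherwise. Then $s_i^2 = \mathrm{id}$ for all $i$. -/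
/-- The Weyl group generators `sᵢ` of the paper, acting as field automorphisms of
`K = ℂ(α, f, τ)` by `sᵢ(αᵢ) = -αᵢ`, `sᵢ(α_{i±1}) = α_{i±1} + αᵢ`, `sᵢ(f_{i±1}) = f_{i±1} ± αᵢ/fᵢ`,
`sᵢ(τᵢ) = fᵢτ_{i-1}τ_{i+1}/τᵢ`, fixing all other generators, are involutions: `sᵢ² = 1`.
Here `K` is any field generated by the `αᵢ, fᵢ, τᵢ` (`i ∈ ℤ`). -/
theorem stmt_11 {K : Type*} [Field K] (α f τ : ℤ → K)
    (hf : ∀ i, f i ≠ 0) (hτ : ∀ i, τ i ≠ 0)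
    (hgen : Subfield.closure (Set.range α ∪ Set.range f ∪ Set.range τ) = ⊤)
    (s : ℤ → RingAut K)
    (hα1 : ∀ i, s i (α i) = -α i)
    (hα2 : ∀ i, s i (α (i + 1)) = α (i + 1) + α i)
    (hα3 : ∀ i, s i (α (i - 1)) = α (i - 1) + α i)
    (hα4 : ∀ i j, j ≠ i → j ≠ i + 1 → j ≠ i - 1 → s i (α j) = α j)
    (hf1 : ∀ i, s i (f i) = f i)
    (hf2 : ∀ i, s i (f (i + 1)) = f (i + 1) + α i / f i)
    (hf3 : ∀ i, s i (f (i - 1)) = f (i - 1) - α i / f i)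
    (hf4 : ∀ i j, j ≠ i → j ≠ i + 1 → j ≠ i - 1 → s i (f j) = f j)
    (hτ1 : ∀ i, s i (τ i) = f i * τ (i - 1) * τ (i + 1) / τ i)
    (hτ2 : ∀ i j, j ≠ i → s i (τ j) = τ j) :
    ∀ i, s i * s i = 1 := by
  intro i
  have key : ((s i).toRingHom.comp (s i).toRingHom) = RingHom.id K := by
    apply RingHom.eq_of_eqOn_of_field_closure_eq_top hgen
    rintro x ((⟨j, rfl⟩ | ⟨j, rfl⟩) | ⟨j, rfl⟩)
    · -- α j
      simp only [RingHom.coe_comp, Function.comp_apply, RingHom.id_apply,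
        RingEquiv.toRingHom_eq_coe, RingHom.coe_coe]
      rcases eq_or_ne j i with rfl | h1
      · rw [hα1, map_neg, hα1, neg_neg]
      rcases eq_or_ne j (i + 1) with rfl | h2
      · rw [hα2, map_add, hα2, hα1]; ring
      rcases eq_or_ne j (i - 1) with rfl | h3
      · rw [hα3, map_add, hα3, hα1]; ring
      · rw [hα4 i j h1 h2 h3, hα4 i j h1 h2 h3]
    · -- f j
      simp only [RingHom.coe_comp, Function.comp_apply, RingHom.id_apply,
        RingEquiv.toRingHom_eq_coe, RingHom.coe_coe]
      rcases eq_or_ne j i with rfl | h1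
      · rw [hf1, hf1]
      rcases eq_or_ne j (i + 1) with rfl | h2
      · rw [hf2, map_add, hf2, map_div₀, hα1, hf1]; ring
      rcases eq_or_ne j (i - 1) with rfl | h3
      · rw [hf3, map_sub, hf3, map_div₀, hα1, hf1]; ring
      · rw [hf4 i j h1 h2 h3, hf4 i j h1 h2 h3]
    · -- τ j
      simp only [RingHom.coe_comp, Function.comp_apply, RingHom.id_apply,
        RingEquiv.toRingHom_eq_coe, RingHom.coe_coe]
      rcases eq_or_ne j i with rfl | h1
      · rw [hτ1, map_div₀, map_mul, map_mul, hf1, hτ1,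
          hτ2 j (j - 1) (by omega), hτ2 j (j + 1) (by omega)]
        field_simp
        exact mul_div_cancel_left₀ _ (mul_ne_zero (mul_ne_zero (hf j) (hτ _)) (hτ _))
      · rw [hτ2 i j h1, hτ2 i j h1]
  ext x
  have := RingHom.congr_fun key x
  simpa using this
end

section
/- With the automorphisms $s_i$ of $K = \mathbb{C}(\alpha_j, f_j, \tau_j)$ defined as above, one has the braid relation $(s_i s_{i+1})^3 = \mathrm{id}$ and the commutation relation $s_i s_j = s_j s_i$ for $|i - j| \ge 2$, so the $s_i$ generate a representation of the affine Weyl group of type $A_\infty$ by field automorphisms. -/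
/-!
Write the action on the `α`s and `f`s uniformly as `sᵢ(αⱼ) = αⱼ - aᵢⱼ αᵢ` and
`sᵢ(fⱼ) = fⱼ + uᵢⱼ αᵢ / fᵢ`, with `a` the Cartan matrix and `u` the orientation matrix of
type `A_∞`. An automorphism of `K` is determined by its values on the generators, so each relation
only has to be checked on `αₖ`, `fₖ`, `τₖ`, and with the uniform formulas this needs no case
analysis in `k` except for the `τ`s. For `|i - j| ≥ 2` we have `aᵢⱼ = uᵢⱼ = 0`, so `sᵢ` and `sⱼ`
commute. Since the `sᵢ` are involutions, `(sᵢ sᵢ₊₁)³ = 1` is the braid relation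
`sᵢ sᵢ₊₁ sᵢ = sᵢ₊₁ sᵢ sᵢ₊₁`. To check it, let `P = fᵢ fᵢ₊₁ + αᵢ` and `Q = fᵢ fᵢ₊₁ - αᵢ₊₁`.
These are the numerators of `sᵢ(fᵢ₊₁)` and `sᵢ₊₁(fᵢ)`, and `P` is `sᵢ₊₁`-invariant while `Q` is
`sᵢ`-invariant. So every denominator in the computation is a product of `fᵢ`, `fᵢ₊₁`, `P` and `Q`.
-/

theorem RingAut.ext_of_subfield_closure_eq_top {K : Type*} [Field K] {S : Set K}
    (hS : Subfield.closure S = ⊤) {φ ψ : RingAut K} (h : Set.EqOn φ ψ S) : φ = ψ :=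
  RingEquiv.toRingHom_injective (RingHom.eq_of_eqOn_of_field_closure_eq_top hS h)

theorem pow_three_eq_one_of_braid {M : Type*} [Monoid M] {a b : M} (ha : a * a = 1)
    (hb : b * b = 1) (hab : a * b * a = b * a * b) : (a * b) ^ 3 = 1 := by
  calc (a * b) ^ 3 = a * b * a * (b * a * b) := by
        simp only [pow_succ, pow_zero, one_mul, mul_assoc]
    _ = b * a * (b * b) * a * b := by rw [hab]; simp only [mul_assoc]
    _ = 1 := by rw [hb, mul_one, mul_assoc b, ha, mul_one, hb]

def cartanAInfty : Matrix ℤ ℤ ℤ := fun i j => if i = j then 2 else if |i - j| = 1 then -1 else 0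

/-- Noumi–Yamada's orientation matrix `uᵢⱼ` of the Dynkin diagram of type `A_∞`. -/
def orientationAInfty : Matrix ℤ ℤ ℤ := fun i j => if |j - i| = 1 then j - i else 0

namespace cartanAInfty

@[simp] theorem self (i : ℤ) : cartanAInfty i i = 2 := if_pos rfl

theorem of_abs_sub_eq_one {i j : ℤ} (h : |i - j| = 1) : cartanAInfty i j = -1 := by
  rw [cartanAInfty, if_neg (by rintro rfl; simp at h), if_pos h]

@[simp] theorem succ_right (i : ℤ) : cartanAInfty i (i + 1) = -1 := of_abs_sub_eq_one (by simp)

@[simp] theorem succ_left (i : ℤ) : cartanAInfty (i + 1) i = -1 := of_abs_sub_eq_one (by simp)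

theorem of_two_le_abs {i j : ℤ} (h : 2 ≤ |i - j|) : cartanAInfty i j = 0 := by
  unfold cartanAInfty
  rw [if_neg (by rintro rfl; simp at h), if_neg (by omega)]

end cartanAInfty

namespace orientationAInfty

@[simp] theorem self (i : ℤ) : orientationAInfty i i = 0 := by
  simp [orientationAInfty]

@[simp] theorem succ_right (i : ℤ) : orientationAInfty i (i + 1) = 1 := by
  simp [orientationAInfty]

@[simp] theorem succ_left (i : ℤ) : orientationAInfty (i + 1) i = -1 := by
  simp [orientationAInfty]

theorem of_two_le_abs {i j : ℤ} (h : 2 ≤ |i - j|) : orientationAInfty i j = 0 := by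
  rw [abs_sub_comm] at h
  exact if_neg (by omega)

end orientationAInfty

structure IsAffineWeylAction {K : Type*} [Field K] (α f τ : ℤ → K) (s : ℤ → RingAut K) :
    Prop where
  f_ne_zero : ∀ i, f i ≠ 0
  tau_ne_zero : ∀ i, τ i ≠ 0
  alpha_self : ∀ i, s i (α i) = -α i
  alpha_succ : ∀ i, s i (α (i + 1)) = α (i + 1) + α i
  alpha_pred : ∀ i, s i (α (i - 1)) = α (i - 1) + α i
  alpha_of_ne : ∀ i j, j ≠ i → j ≠ i + 1 → j ≠ i - 1 → s i (α j) = α j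
  f_self : ∀ i, s i (f i) = f i
  f_succ : ∀ i, s i (f (i + 1)) = f (i + 1) + α i / f i
  f_pred : ∀ i, s i (f (i - 1)) = f (i - 1) - α i / f i
  f_of_ne : ∀ i j, j ≠ i → j ≠ i + 1 → j ≠ i - 1 → s i (f j) = f j
  tau_self : ∀ i, s i (τ i) = f i * τ (i - 1) * τ (i + 1) / τ i
  tau_of_ne : ∀ i j, j ≠ i → s i (τ j) = τ j

namespace IsAffineWeylAction

variable {K : Type*} [Field K] {α f τ : ℤ → K} {s : ℤ → RingAut K}

theorem ext_of_generators
    (hgen : Subfield.closure (Set.range α ∪ Set.range f ∪ Set.range τ) = ⊤)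
    {φ ψ : RingAut K} (hα : ∀ k, φ (α k) = ψ (α k)) (hf : ∀ k, φ (f k) = ψ (f k))
    (hτ : ∀ k, φ (τ k) = ψ (τ k)) : φ = ψ := by
  refine RingAut.ext_of_subfield_closure_eq_top hgen ?_
  rintro _ ((⟨k, rfl⟩ | ⟨k, rfl⟩) | ⟨k, rfl⟩)
  exacts [hα k, hf k, hτ k]

theorem apply_alpha (h : IsAffineWeylAction α f τ s) (i k : ℤ) :
    s i (α k) = α k - cartanAInfty i k * α i := by
  obtain rfl | h1 := eq_or_ne k i
  · rw [h.alpha_self, cartanAInfty.self]; push_cast; ring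
  obtain rfl | h2 := eq_or_ne k (i + 1)
  · rw [h.alpha_succ]; simp
  obtain rfl | h3 := eq_or_ne k (i - 1)
  · rw [h.alpha_pred, cartanAInfty.of_abs_sub_eq_one (by simp)]; simp
  · rw [h.alpha_of_ne i k h1 h2 h3, cartanAInfty.of_two_le_abs (le_abs.mpr (by omega))]; simp

theorem apply_f (h : IsAffineWeylAction α f τ s) (i k : ℤ) :
    s i (f k) = f k + orientationAInfty i k * α i / f i := by
  obtain rfl | h1 := eq_or_ne k i
  · rw [h.f_self]; simp
  obtain rfl | h2 := eq_or_ne k (i + 1)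
  · rw [h.f_succ]; simp
  obtain rfl | h3 := eq_or_ne k (i - 1)
  · have hu : orientationAInfty i (i - 1) = -1 := by
      simpa using orientationAInfty.succ_left (i - 1)
    rw [h.f_pred, hu]; push_cast; ring
  · rw [h.f_of_ne i k h1 h2 h3, orientationAInfty.of_two_le_abs (le_abs.mpr (by omega))]; simp

theorem mul_self_eq_one (h : IsAffineWeylAction α f τ s)
    (hgen : Subfield.closure (Set.range α ∪ Set.range f ∪ Set.range τ) = ⊤) (i : ℤ) :
    s i * s i = 1 := by
  refine ext_of_generators hgen (fun k => ?_) (fun k => ?_) (fun k => ?_)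
  · simp only [RingAut.mul_apply, h.apply_alpha, map_sub, map_mul, map_intCast,
      cartanAInfty.self, RingAut.one_apply]
    push_cast; ring
  · simp only [RingAut.mul_apply, h.apply_f, map_add, map_div₀, map_mul, map_intCast,
      h.apply_alpha, orientationAInfty.self, cartanAInfty.self, RingAut.one_apply]
    push_cast; ring
  · simp only [RingAut.mul_apply, RingAut.one_apply]
    obtain rfl | hk := eq_or_ne i k
    · have := h.f_ne_zero i
      have := h.tau_ne_zero i
      have := h.tau_ne_zero (i - 1)
      have := h.tau_ne_zero (i + 1)
      rw [h.tau_self, map_div₀, map_mul, map_mul, h.f_self, h.tau_self,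
        h.tau_of_ne i (i - 1) (by omega), h.tau_of_ne i (i + 1) (by omega)]
      field_simp
    · rw [h.tau_of_ne i k hk.symm, h.tau_of_ne i k hk.symm]

theorem apply_f_succ (h : IsAffineWeylAction α f τ s) (i : ℤ) :
    s i (f (i + 1)) = (f i * f (i + 1) + α i) / f i := by
  rw [h.f_succ]; field_simp [h.f_ne_zero i]

theorem succ_apply_f (h : IsAffineWeylAction α f τ s) (i : ℤ) :
    s (i + 1) (f i) = (f i * f (i + 1) - α (i + 1)) / f (i + 1) := by
  rw [h.apply_f, orientationAInfty.succ_left]; field_simp [h.f_ne_zero (i + 1)]; push_cast; ring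

theorem f_mul_f_succ_add_alpha_ne_zero (h : IsAffineWeylAction α f τ s) (i : ℤ) :
    f i * f (i + 1) + α i ≠ 0 := by
  have := (map_ne_zero (s i)).mpr (h.f_ne_zero (i + 1))
  rw [h.apply_f_succ] at this
  exact (div_ne_zero_iff.mp this).1

theorem f_mul_f_succ_sub_alpha_succ_ne_zero (h : IsAffineWeylAction α f τ s) (i : ℤ) :
    f i * f (i + 1) - α (i + 1) ≠ 0 := by
  have := (map_ne_zero (s (i + 1))).mpr (h.f_ne_zero i)
  rw [h.succ_apply_f] at this
  exact (div_ne_zero_iff.mp this).1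

theorem succ_apply_f_mul_f_succ_add_alpha (h : IsAffineWeylAction α f τ s) (i : ℤ) :
    s (i + 1) (f i * f (i + 1) + α i) = f i * f (i + 1) + α i := by
  rw [map_add, map_mul, h.succ_apply_f, h.f_self, h.apply_alpha, cartanAInfty.succ_left]
  field_simp [h.f_ne_zero (i + 1)]; push_cast; ring

theorem apply_f_mul_f_succ_sub_alpha_succ (h : IsAffineWeylAction α f τ s) (i : ℤ) :
    s i (f i * f (i + 1) - α (i + 1)) = f i * f (i + 1) - α (i + 1) := by
  rw [map_sub, map_mul, h.apply_f_succ, h.f_self, h.apply_alpha, cartanAInfty.succ_right]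
  field_simp [h.f_ne_zero i]; push_cast; ring

theorem braid_apply_alpha (h : IsAffineWeylAction α f τ s) (i k : ℤ) :
    s i (s (i + 1) (s i (α k))) = s (i + 1) (s i (s (i + 1) (α k))) := by
  simp only [h.apply_alpha, map_sub, map_mul, map_intCast, cartanAInfty.self,
    cartanAInfty.succ_left, cartanAInfty.succ_right]
  push_cast; ring

theorem braid_apply_f (h : IsAffineWeylAction α f τ s) (i k : ℤ) :
    s i (s (i + 1) (s i (f k))) = s (i + 1) (s i (s (i + 1) (f k))) := by
  have hx := h.f_ne_zero i
  have hy := h.f_ne_zero (i + 1)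
  have hP := h.f_mul_f_succ_add_alpha_ne_zero i
  have hQ := h.f_mul_f_succ_sub_alpha_succ_ne_zero i
  have hsy := h.apply_f_succ i
  have hsx := h.succ_apply_f i
  have hsP := h.succ_apply_f_mul_f_succ_add_alpha i
  have hsQ := h.apply_f_mul_f_succ_sub_alpha_succ i
  -- as atoms, `P` and `Q` cannot be expanded by `simp`, so no nested denominators arise
  generalize hPdef : f i * f (i + 1) + α i = P at hP hsy hsP
  generalize hQdef : f i * f (i + 1) - α (i + 1) = Q at hQ hsx hsQ
  simp only [h.apply_f _ k, map_add, map_div₀, map_mul, map_intCast, hsy, hsx, hsP, hsQ,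
    h.apply_alpha, map_sub, cartanAInfty.self, cartanAInfty.succ_left, cartanAInfty.succ_right]
  field_simp
  subst hPdef hQdef
  push_cast
  ring

theorem braid_apply_tau (h : IsAffineWeylAction α f τ s) (i k : ℤ) :
    s i (s (i + 1) (s i (τ k))) = s (i + 1) (s i (s (i + 1) (τ k))) := by
  have := h.f_ne_zero i
  have := h.f_ne_zero (i + 1)
  have := h.f_mul_f_succ_add_alpha_ne_zero i
  have := h.f_mul_f_succ_sub_alpha_succ_ne_zero i
  have := h.tau_ne_zero (i - 1)
  have := h.tau_ne_zero i
  have := h.tau_ne_zero (i + 1)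
  have := h.tau_ne_zero (i + 2)
  have t1 := h.tau_of_ne i (i - 1) (by omega)
  have t2 := h.tau_of_ne i (i + 1) (by omega)
  have t3 := h.tau_of_ne i (i + 2) (by omega)
  have t4 := h.tau_of_ne (i + 1) (i - 1) (by omega)
  have t5 := h.tau_of_ne (i + 1) i (by omega)
  have t6 := h.tau_of_ne (i + 1) (i + 2) (by omega)
  have t7 := h.tau_self (i + 1)
  rw [add_sub_cancel_right, add_assoc, one_add_one_eq_two] at t7
  obtain rfl | hik := eq_or_ne i k
  · simp only [h.tau_self i, map_div₀, map_mul, t1, t2, t3, t4, t5, t7, h.apply_f_succ,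
      h.succ_apply_f, h.apply_f_mul_f_succ_sub_alpha_succ]
    field_simp
  obtain rfl | hik' := eq_or_ne (i + 1) k
  · simp only [h.tau_self i, map_div₀, map_mul, t2, t3, t4, t5, t6, t7, h.apply_f_succ,
      h.succ_apply_f, h.succ_apply_f_mul_f_succ_add_alpha]
    field_simp
  · simp only [h.tau_of_ne i k hik.symm, h.tau_of_ne (i + 1) k hik'.symm]

theorem braid (h : IsAffineWeylAction α f τ s)
    (hgen : Subfield.closure (Set.range α ∪ Set.range f ∪ Set.range τ) = ⊤) (i : ℤ) :
    s i * s (i + 1) * s i = s (i + 1) * s i * s (i + 1) :=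
  ext_of_generators hgen (h.braid_apply_alpha i) (h.braid_apply_f i) (h.braid_apply_tau i)

theorem commute_of_two_le_abs (h : IsAffineWeylAction α f τ s)
    (hgen : Subfield.closure (Set.range α ∪ Set.range f ∪ Set.range τ) = ⊤) {i j : ℤ}
    (hij : 2 ≤ |i - j|) : s i * s j = s j * s i := by
  have hji : 2 ≤ |j - i| := abs_sub_comm i j ▸ hij
  have hf (i j : ℤ) (hij : 2 ≤ |i - j|) : s i (f j) = f j := by
    rw [h.apply_f, orientationAInfty.of_two_le_abs hij]; simp
  have hτ (i j : ℤ) (hij : 2 ≤ |i - j|) : s i (s j (τ j)) = s j (τ j) := by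
    rw [h.tau_self, map_div₀, map_mul, map_mul, hf i j hij,
      h.tau_of_ne i j (by rintro rfl; simp at hij),
      h.tau_of_ne i (j - 1) (by rintro rfl; simp at hij),
      h.tau_of_ne i (j + 1) (by rintro rfl; simp at hij)]
  refine ext_of_generators hgen (fun k => ?_) (fun k => ?_) (fun k => ?_)
  · simp only [RingAut.mul_apply, h.apply_alpha, map_sub, map_mul, map_intCast,
      cartanAInfty.of_two_le_abs hij, cartanAInfty.of_two_le_abs hji]
    push_cast; ring
  · simp only [RingAut.mul_apply, h.apply_f _ k, map_add, map_div₀, map_mul, map_intCast,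
      hf i j hij, hf j i hji, h.apply_alpha, cartanAInfty.of_two_le_abs hij,
      cartanAInfty.of_two_le_abs hji]
    push_cast; ring
  · simp only [RingAut.mul_apply]
    obtain rfl | hik := eq_or_ne i k
    · rw [hτ j i hji, h.tau_of_ne j i (by rintro rfl; simp at hij)]
    obtain rfl | hjk := eq_or_ne j k
    · rw [hτ i j hij, h.tau_of_ne i j (by rintro rfl; simp at hij)]
    rw [h.tau_of_ne i k hik.symm, h.tau_of_ne j k hjk.symm, h.tau_of_ne i k hik.symm]

end IsAffineWeylAction

/-- The automorphisms `sᵢ` of `K = ℂ(α, f, τ)` (defined on generators by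
`sᵢ(αᵢ) = -αᵢ`, `sᵢ(α_{i±1}) = α_{i±1} + αᵢ`, `sᵢ(f_{i±1}) = f_{i±1} ± αᵢ/fᵢ`,
`sᵢ(τᵢ) = fᵢτ_{i-1}τ_{i+1}/τᵢ`, other generators fixed) satisfy the braid relations
`(sᵢ s_{i+1})³ = 1` and the commutation relations `sᵢ sⱼ = sⱼ sᵢ` for `|i - j| ≥ 2`,
hence give a representation of the affine Weyl group of type `A_∞` by field automorphisms.
Here `K` is any field generated by the `αᵢ, fᵢ, τᵢ` (`i ∈ ℤ`). -/
theorem stmt_12 {K : Type*} [Field K] (α f τ : ℤ → K)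
    (hf : ∀ i, f i ≠ 0) (hτ : ∀ i, τ i ≠ 0)
    (hgen : Subfield.closure (Set.range α ∪ Set.range f ∪ Set.range τ) = ⊤)
    (s : ℤ → RingAut K)
    (hα1 : ∀ i, s i (α i) = -α i)
    (hα2 : ∀ i, s i (α (i + 1)) = α (i + 1) + α i)
    (hα3 : ∀ i, s i (α (i - 1)) = α (i - 1) + α i)
    (hα4 : ∀ i j, j ≠ i → j ≠ i + 1 → j ≠ i - 1 → s i (α j) = α j)
    (hf1 : ∀ i, s i (f i) = f i)
    (hf2 : ∀ i, s i (f (i + 1)) = f (i + 1) + α i / f i)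
    (hf3 : ∀ i, s i (f (i - 1)) = f (i - 1) - α i / f i)
    (hf4 : ∀ i j, j ≠ i → j ≠ i + 1 → j ≠ i - 1 → s i (f j) = f j)
    (hτ1 : ∀ i, s i (τ i) = f i * τ (i - 1) * τ (i + 1) / τ i)
    (hτ2 : ∀ i j, j ≠ i → s i (τ j) = τ j) :
    (∀ i, (s i * s (i + 1)) ^ 3 = 1) ∧
    (∀ i j, 2 ≤ |i - j| → s i * s j = s j * s i) := by
  have h : IsAffineWeylAction α f τ s :=
    ⟨hf, hτ, hα1, hα2, hα3, hα4, hf1, hf2, hf3, hf4, hτ1, hτ2⟩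
  exact ⟨fun i => pow_three_eq_one_of_braid (h.mul_self_eq_one hgen i)
      (h.mul_self_eq_one hgen (i + 1)) (h.braid hgen i),
    fun _ _ hij => h.commute_of_two_le_abs hgen hij⟩
end
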